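/- arXiv:1212.2863 — 8 statements merged into one kernel-verified Lean document; each statement's English description precedes it below -/
import Mathlib

section
/- Every regular almost Lindelöf topological space is Lindelöf. -/
/-- Every regular almost Lindelöf topological space is Lindelöf. -/
theorem stmt_4 {X : Type*} [TopologicalSpace X]
    (hreg : ∀ (x : X) (U : Set X), IsOpen U → x ∈ U →
        ∃ V : Set X, IsOpen V ∧ x ∈ V ∧ closure V ⊆ U)
    (haL : ∀ 𝒰 : Set (Set X), (∀ U ∈ 𝒰, IsOpen U) → ⋃₀ 𝒰 = Set.univ →
        ∃ 𝒱 ⊆ 𝒰, 𝒱.Countable ∧ (⋃ V ∈ 𝒱, closure V) = Set.univ) :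
    ∀ 𝒰 : Set (Set X), (∀ U ∈ 𝒰, IsOpen U) → ⋃₀ 𝒰 = Set.univ →
      ∃ 𝒱 ⊆ 𝒰, 𝒱.Countable ∧ ⋃₀ 𝒱 = Set.univ := by
  intro 𝒰 hopen hcov
  -- Refinement family
  set 𝒲 : Set (Set X) := {V | IsOpen V ∧ ∃ U ∈ 𝒰, closure V ⊆ U} with h𝒲
  have hWopen : ∀ V ∈ 𝒲, IsOpen V := fun V hV => hV.1
  have hWcov : ⋃₀ 𝒲 = Set.univ := by
    apply Set.eq_univ_of_forall
    intro x
    have hx : x ∈ ⋃₀ 𝒰 := hcov ▸ Set.mem_univ x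
    obtain ⟨U, hU, hxU⟩ := hx
    obtain ⟨V, hVo, hxV, hVc⟩ := hreg x U (hopen U hU) hxU
    exact ⟨V, ⟨hVo, U, hU, hVc⟩, hxV⟩
  obtain ⟨𝒱, h𝒱sub, h𝒱cnt, h𝒱cov⟩ := haL 𝒲 hWopen hWcov
  -- choose for each V ∈ 𝒱 a U ∈ 𝒰 containing closure V
  have hchoice : ∀ V ∈ 𝒱, ∃ U ∈ 𝒰, closure V ⊆ U := fun V hV => (h𝒱sub hV).2
  choose! f hf hfc using hchoice
  refine ⟨f '' 𝒱, ?_, h𝒱cnt.image f, ?_⟩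
  · rintro _ ⟨V, hV, rfl⟩
    exact hf V hV
  · apply Set.eq_univ_of_forall
    intro x
    have hx : x ∈ ⋃ V ∈ 𝒱, closure V := h𝒱cov ▸ Set.mem_univ x
    simp only [Set.mem_iUnion] at hx
    obtain ⟨V, hV, hxV⟩ := hx
    exact ⟨f V, ⟨V, hV, rfl⟩, hfc V hV hxV⟩
end

section
/- If X is an almost Lindelöf topological space and F ⊆ X is clopen (both closed and open), then the subspace F is almost Lindelöf. -/
/-- A topological space is almost Lindelöf if every open cover has a countable
subfamily whose closures cover the space. -/
def AlmostLindelof (X : Type*) [TopologicalSpace X] : Prop :=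
  ∀ 𝒰 : Set (Set X), (∀ U ∈ 𝒰, IsOpen U) → ⋃₀ 𝒰 = Set.univ →
    ∃ 𝒱 ⊆ 𝒰, 𝒱.Countable ∧ (⋃ V ∈ 𝒱, closure V) = Set.univ

/-- A clopen subspace of an almost Lindelöf space is almost Lindelöf. -/
theorem stmt_6 {X : Type*} [TopologicalSpace X] (hX : AlmostLindelof X)
    (F : Set X) (hclosed : IsClosed F) (hopen : IsOpen F) :
    AlmostLindelof F := by
  intro 𝒰 hUopen hUcov
  set f : Set F → Set X := fun U => Subtype.val '' U with hf
  set 𝒲 : Set (Set X) := f '' 𝒰 ∪ {Fᶜ} with h𝒲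
  have hWopen : ∀ W ∈ 𝒲, IsOpen W := by
    rintro W (⟨U, hU, rfl⟩ | rfl)
    · exact hopen.isOpenMap_subtype_val _ (hUopen U hU)
    · exact hclosed.isOpen_compl
  have hWcov : ⋃₀ 𝒲 = Set.univ := by
    apply Set.eq_univ_of_forall
    intro x
    by_cases hx : x ∈ F
    · have : (⟨x, hx⟩ : F) ∈ ⋃₀ 𝒰 := hUcov ▸ Set.mem_univ _
      obtain ⟨U, hU, hxU⟩ := this
      exact ⟨f U, Or.inl ⟨U, hU, rfl⟩, ⟨⟨x, hx⟩, hxU, rfl⟩⟩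
    · exact ⟨Fᶜ, Or.inr rfl, hx⟩
  obtain ⟨𝒱', h𝒱'sub, h𝒱'c, h𝒱'cov⟩ := hX 𝒲 hWopen hWcov
  refine ⟨{U ∈ 𝒰 | f U ∈ 𝒱'}, fun U hU => hU.1, ?_, ?_⟩
  · have : {U ∈ 𝒰 | f U ∈ 𝒱'} ⊆ f ⁻¹' 𝒱' := fun U hU => hU.2
    exact (h𝒱'c.preimage (Set.image_injective.2 Subtype.val_injective)).mono this
  · apply Set.eq_univ_of_forall
    rintro ⟨x, hx⟩
    have : x ∈ ⋃ V ∈ 𝒱', closure V := h𝒱'cov ▸ Set.mem_univ _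
    obtain ⟨W, hW, hxW⟩ := Set.mem_iUnion₂.1 this
    rcases h𝒱'sub hW with ⟨U, hU, rfl⟩ | rfl
    · refine Set.mem_iUnion₂.2 ⟨U, ⟨hU, hW⟩, ?_⟩
      rw [closure_subtype]
      exact hxW
    · rw [hopen.isClosed_compl.closure_eq] at hxW
      exact absurd hx hxW
end

section
/- If X is an almost Lindelöf topological space and Y is a compact topological space, then the product X × Y is almost Lindelöf. -/
/-- If X is almost Lindelöf and Y is compact, then X × Y is almost Lindelöf. -/
theorem stmt_7 {X Y : Type*} [TopologicalSpace X] [TopologicalSpace Y]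
    [CompactSpace Y] (hX : AlmostLindelof X) : AlmostLindelof (X × Y) := by
  intro 𝒰 hopen hcov
  cases isEmpty_or_nonempty X with
  | inl h =>
    refine ⟨∅, Set.empty_subset _, Set.countable_empty, ?_⟩
    rw [Set.eq_univ_iff_forall]
    exact fun p => (IsEmpty.false p.1).elim
  | inr h => ?_
  have key : ∀ x : X, ∃ (F : Set (Set (X × Y))) (W : Set X),
      F ⊆ 𝒰 ∧ F.Finite ∧ IsOpen W ∧ x ∈ W ∧
        (W ×ˢ (Set.univ : Set Y)) ⊆ ⋃ U ∈ F, U := by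
    intro x
    have hcomp : IsCompact (({x} : Set X) ×ˢ (Set.univ : Set Y)) :=
      isCompact_singleton.prod isCompact_univ
    have hsub : ({x} : Set X) ×ˢ (Set.univ : Set Y) ⊆ ⋃ U ∈ 𝒰, U := by
      rw [← Set.sUnion_eq_biUnion, hcov]; exact Set.subset_univ _
    obtain ⟨F, hF𝒰, hFfin, hFcov⟩ :=
      hcomp.elim_finite_subcover_image (fun U hU => hopen U hU) hsub
    have hopenU : IsOpen (⋃ U ∈ F, U) := isOpen_biUnion fun U hU => hopen U (hF𝒰 hU)
    obtain ⟨u, v, hu, _, hxu, hyv, huv⟩ :=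
      generalized_tube_lemma isCompact_singleton isCompact_univ hopenU hFcov
    refine ⟨F, u, hF𝒰, hFfin, hu, hxu rfl, ?_⟩
    intro p hp
    exact huv ⟨hp.1, hyv hp.2⟩
  choose F W hF𝒰 hFfin hWopen hxW htube using key
  obtain ⟨𝒱', h𝒱'sub, h𝒱'cnt, h𝒱'cov⟩ := hX (Set.range W)
    (by rintro _ ⟨x, rfl⟩; exact hWopen x)
    (Set.eq_univ_of_univ_subset fun x _ => ⟨W x, ⟨x, rfl⟩, hxW x⟩)
  choose! rep hrep using fun V (hV : V ∈ 𝒱') => h𝒱'sub hV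
  refine ⟨⋃ x ∈ rep '' 𝒱', F x, ?_, ?_, ?_⟩
  · exact Set.iUnion₂_subset fun x _ => hF𝒰 x
  · exact (h𝒱'cnt.image rep).biUnion fun x _ => (hFfin x).countable
  · apply Set.eq_univ_of_univ_subset
    intro p _
    have h1 : p.1 ∈ ⋃ V ∈ 𝒱', closure V := h𝒱'cov ▸ Set.mem_univ p.1
    obtain ⟨V, hV, hpV⟩ := Set.mem_iUnion₂.1 h1
    set x := rep V with hx
    have hWx : W x = V := hrep V hV
    have hp2 : p ∈ closure ((W x) ×ˢ (Set.univ : Set Y)) := by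
      rw [closure_prod_eq, closure_univ]
      exact ⟨hWx ▸ hpV, Set.mem_univ _⟩
    have hp3 : p ∈ ⋃ U ∈ F x, closure U := by
      rw [← (hFfin x).closure_biUnion]
      exact closure_mono (htube x) hp2
    obtain ⟨U, hU, hpU⟩ := Set.mem_iUnion₂.1 hp3
    exact Set.mem_iUnion₂.2 ⟨U, Set.mem_iUnion₂.2 ⟨x, ⟨V, hV, rfl⟩, hU⟩, hpU⟩
end

section
/- The Sorgenfrey plane ℝₗ × ℝₗ is not almost Lindelöf. -/
/-- The Sorgenfrey line: the real line with the topology generated by the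
half-open intervals `[a, b)` for `a < b`. -/
def SorgenfreyLine : Type := ℝ

noncomputable instance : LinearOrder SorgenfreyLine := inferInstanceAs (LinearOrder ℝ)

instance : TopologicalSpace SorgenfreyLine :=
  TopologicalSpace.generateFrom
    {s : Set SorgenfreyLine | ∃ a b : SorgenfreyLine, a < b ∧ s = Set.Ico a b}

namespace SL8aux

def mk (x : ℝ) : SorgenfreyLine := x
def toR (x : SorgenfreyLine) : ℝ := x

lemma mk_lt_mk {a b : ℝ} : mk a < mk b ↔ a < b := Iff.rfl
lemma mk_le_mk {a b : ℝ} : mk a ≤ mk b ↔ a ≤ b := Iff.rfl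
lemma mk_toR (x : SorgenfreyLine) : mk (toR x) = x := rfl
lemma toR_mk (x : ℝ) : toR (mk x) = x := rfl
lemma mk_le_iff {a : ℝ} {b : SorgenfreyLine} : mk a ≤ b ↔ a ≤ toR b := Iff.rfl
lemma le_mk_iff {a : SorgenfreyLine} {b : ℝ} : a ≤ mk b ↔ toR a ≤ b := Iff.rfl
lemma lt_mk_iff {a : SorgenfreyLine} {b : ℝ} : a < mk b ↔ toR a < b := Iff.rfl
lemma mk_lt_iff {a : ℝ} {b : SorgenfreyLine} : mk a < b ↔ a < toR b := Iff.rfl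

lemma isOpen_Ico {a b : ℝ} (h : a < b) : IsOpen (Set.Ico (mk a) (mk b)) :=
  TopologicalSpace.isOpen_generateFrom_of_mem ⟨mk a, mk b, h, rfl⟩

lemma isOpen_Iio (a : SorgenfreyLine) : IsOpen (Set.Iio a) := by
  rw [isOpen_iff_forall_mem_open]
  intro x hx
  exact ⟨Set.Ico x a, Set.Ico_subset_Iio_self, isOpen_Ico hx, le_refl (toR x), hx⟩

lemma isOpen_Ioi (a : SorgenfreyLine) : IsOpen (Set.Ioi a) := by
  rw [isOpen_iff_forall_mem_open]
  intro x hx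
  refine ⟨Set.Ico (mk (toR x)) (mk (toR x + 1)), ?_, isOpen_Ico (by linarith),
    le_refl (toR x), show toR x < toR x + 1 by linarith⟩
  intro y hy
  exact lt_of_lt_of_le hx hy.1

lemma isClosed_Icc (a b : SorgenfreyLine) : IsClosed (Set.Icc a b) := by
  rw [← isOpen_compl_iff]
  have h : (Set.Icc a b)ᶜ = Set.Iio a ∪ Set.Ioi b := by
    ext x
    rw [Set.mem_union, Set.mem_Iio, Set.mem_Ioi, Set.mem_compl_iff, Set.mem_Icc,
      not_and_or, not_le, not_le]
  rw [h]
  exact (isOpen_Iio a).union (isOpen_Ioi b)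

/-- The corner boxes. -/
def U (x : ℝ) : Set (SorgenfreyLine × SorgenfreyLine) :=
  (Set.Ico (mk x) (mk (x + 1))) ×ˢ (Set.Ico (mk (-x)) (mk (-x + 1)))

def A : Set (SorgenfreyLine × SorgenfreyLine) := {p | toR p.1 + toR p.2 < 0}

def B (q : ℚ) : Set (SorgenfreyLine × SorgenfreyLine) := {p | (q : ℝ) < toR p.1 + toR p.2}

lemma isOpen_U (x : ℝ) : IsOpen (U x) :=
  (isOpen_Ico (by linarith)).prod (isOpen_Ico (by linarith))

lemma isOpen_A : IsOpen A := by
  rw [isOpen_iff_forall_mem_open]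
  intro p hp
  have hs : toR p.1 + toR p.2 < 0 := hp
  set ε : ℝ := -(toR p.1 + toR p.2) / 2 with hε
  have hε0 : 0 < ε := by simp [hε]; linarith
  refine ⟨(Set.Ico (mk (toR p.1)) (mk (toR p.1 + ε))) ×ˢ (Set.Ico (mk (toR p.2)) (mk (toR p.2 + ε))), ?_, ?_, ?_⟩
  · rintro ⟨a, b⟩ ⟨⟨_, ha2⟩, ⟨_, hb2⟩⟩
    have ha2' : toR a < toR p.1 + ε := ha2
    have hb2' : toR b < toR p.2 + ε := hb2
    show toR a + toR b < 0
    have : toR a + toR b < toR p.1 + toR p.2 + 2 * ε := by linarith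
    simpa [hε] using this.trans_le (by linarith)
  · exact IsOpen.prod (isOpen_Ico (by linarith)) (isOpen_Ico (by linarith))
  · exact ⟨⟨le_refl _, show toR p.1 < toR p.1 + ε by linarith⟩,
      ⟨le_refl _, show toR p.2 < toR p.2 + ε by linarith⟩⟩

lemma isOpen_B (q : ℚ) : IsOpen (B q) := by
  rw [isOpen_iff_forall_mem_open]
  intro p hp
  have hs : (q : ℝ) < toR p.1 + toR p.2 := hp
  refine ⟨(Set.Ico (mk (toR p.1)) (mk (toR p.1 + 1))) ×ˢ (Set.Ico (mk (toR p.2)) (mk (toR p.2 + 1))), ?_, ?_, ?_⟩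
  · rintro ⟨a, b⟩ ⟨⟨ha1, _⟩, ⟨hb1, _⟩⟩
    have ha1' : toR p.1 ≤ toR a := ha1
    have hb1' : toR p.2 ≤ toR b := hb1
    show (q : ℝ) < toR a + toR b
    linarith
  · exact IsOpen.prod (isOpen_Ico (by linarith)) (isOpen_Ico (by linarith))
  · exact ⟨⟨le_refl _, show toR p.1 < toR p.1 + 1 by linarith⟩,
      ⟨le_refl _, show toR p.2 < toR p.2 + 1 by linarith⟩⟩

/-- The point of the antidiagonal. -/
def d (y : ℝ) : SorgenfreyLine × SorgenfreyLine := (mk y, mk (-y))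

lemma mem_d_U (y : ℝ) : d y ∈ U y :=
  ⟨⟨le_refl y, show y < y + 1 by linarith⟩, ⟨le_refl (-y), show -y < -y + 1 by linarith⟩⟩

lemma closure_U_subset (x : ℝ) :
    closure (U x) ⊆ (Set.Icc (mk x) (mk (x + 1))) ×ˢ (Set.Icc (mk (-x)) (mk (-x + 1))) :=
  closure_minimal (Set.prod_mono Set.Ico_subset_Icc_self Set.Ico_subset_Icc_self)
    ((isClosed_Icc _ _).prod (isClosed_Icc _ _))

lemma eq_of_d_mem_closure_U {x y : ℝ} (h : d y ∈ closure (U x)) : y = x := by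
  have h' := closure_U_subset x h
  obtain ⟨⟨h1, h2⟩, ⟨h3, h4⟩⟩ := h'
  have h1' : x ≤ y := h1
  have h3' : -x ≤ -y := h3
  linarith

lemma d_notMem_closure_A (y : ℝ) : d y ∉ closure A := by
  rw [mem_closure_iff]
  push_neg
  refine ⟨U y, isOpen_U y, mem_d_U y, ?_⟩
  rw [Set.eq_empty_iff_forall_notMem]
  rintro ⟨a, b⟩ ⟨⟨⟨ha1, _⟩, ⟨hb1, _⟩⟩, hab⟩
  have ha1' : y ≤ toR a := ha1
  have hb1' : -y ≤ toR b := hb1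
  have : toR a + toR b < 0 := hab
  linarith

lemma d_notMem_closure_B {q : ℚ} (hq : 0 < q) (y : ℝ) : d y ∉ closure (B q) := by
  rw [mem_closure_iff]
  push_neg
  have hq' : (0 : ℝ) < (q : ℝ) := by exact_mod_cast hq
  refine ⟨(Set.Ico (mk y) (mk (y + q / 2))) ×ˢ (Set.Ico (mk (-y)) (mk (-y + q / 2))),
    IsOpen.prod (isOpen_Ico (by linarith)) (isOpen_Ico (by linarith)),
    ⟨⟨le_refl y, show y < y + q / 2 by linarith⟩,
      ⟨le_refl (-y), show -y < -y + q / 2 by linarith⟩⟩, ?_⟩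
  rw [Set.eq_empty_iff_forall_notMem]
  rintro ⟨a, b⟩ ⟨⟨⟨_, ha2⟩, ⟨_, hb2⟩⟩, hab⟩
  have ha2' : toR a < y + q / 2 := ha2
  have hb2' : toR b < -y + q / 2 := hb2
  have : (q : ℝ) < toR a + toR b := hab
  linarith

end SL8aux

open SL8aux in
/-- The Sorgenfrey plane is not almost Lindelöf. -/
theorem stmt_8 :
    ¬ (∀ 𝒰 : Set (Set (SorgenfreyLine × SorgenfreyLine)), (∀ U ∈ 𝒰, IsOpen U) →
        ⋃₀ 𝒰 = Set.univ →
        ∃ 𝒱 ⊆ 𝒰, 𝒱.Countable ∧ (⋃ V ∈ 𝒱, closure V) = Set.univ) := by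
  intro H
  set 𝒰 : Set (Set (SorgenfreyLine × SorgenfreyLine)) :=
    Set.range U ∪ {A} ∪ (B '' {q | 0 < q}) with h𝒰
  have hopen : ∀ V ∈ 𝒰, IsOpen V := by
    rintro V ((⟨x, rfl⟩ | rfl) | ⟨q, _, rfl⟩)
    · exact isOpen_U x
    · exact isOpen_A
    · exact isOpen_B q
  have hcover : ⋃₀ 𝒰 = Set.univ := by
    rw [Set.eq_univ_iff_forall]
    intro p
    rcases lt_trichotomy (toR p.1 + toR p.2) 0 with hs | hs | hs
    · exact ⟨A, Or.inl (Or.inr rfl), hs⟩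
    · refine ⟨U (toR p.1), Or.inl (Or.inl ⟨toR p.1, rfl⟩), ?_⟩
      have hp2 : toR p.2 = -(toR p.1) := by linarith
      refine ⟨⟨le_refl _, show toR p.1 < toR p.1 + 1 by linarith⟩,
        ⟨?_, ?_⟩⟩
      · show -(toR p.1) ≤ toR p.2; linarith
      · show toR p.2 < -(toR p.1) + 1; linarith
    · obtain ⟨q, hq0, hq⟩ := exists_rat_btwn hs
      exact ⟨B q, Or.inr ⟨q, by exact_mod_cast hq0, rfl⟩, hq⟩
  obtain ⟨𝒱, h𝒱sub, h𝒱count, h𝒱closure⟩ := H 𝒰 hopen hcover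
  -- each antidiagonal point is in some closure, which must be a box `U y`
  have key : ∀ y : ℝ, U y ∈ 𝒱 := by
    intro y
    have : d y ∈ ⋃ V ∈ 𝒱, closure V := h𝒱closure ▸ Set.mem_univ _
    obtain ⟨V, hV𝒱, hVc⟩ := Set.mem_iUnion₂.1 this
    rcases h𝒱sub hV𝒱 with (⟨x, rfl⟩ | rfl) | ⟨q, hq, rfl⟩
    · rw [eq_of_d_mem_closure_U hVc]; exact hV𝒱
    · exact absurd hVc (d_notMem_closure_A y)
    · exact absurd hVc (d_notMem_closure_B hq y)
  have hUinj : Function.Injective U := by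
    intro x y hxy
    have : d x ∈ U y := hxy ▸ mem_d_U x
    obtain ⟨⟨h1, _⟩, ⟨h3, _⟩⟩ := this
    have h1' : y ≤ x := h1
    have h3' : -y ≤ -x := h3
    linarith
  have : (Set.univ : Set ℝ).Countable := by
    refine (h𝒱count.preimage hUinj).mono ?_
    intro y _
    exact key y
  exact Cardinal.not_countable_real this
end

section
/- If X is a weakly Lindelöf topological space and F ⊆ X is regularly closed (i.e., F equals the closure of its interior), then the subspace F is weakly Lindelöf. -/
/-- A topological space is weakly Lindelöf if every open cover has a countable
subfamily whose union is dense. -/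
def WeaklyLindelof (X : Type*) [TopologicalSpace X] : Prop :=
  ∀ 𝒰 : Set (Set X), (∀ U ∈ 𝒰, IsOpen U) → ⋃₀ 𝒰 = Set.univ →
    ∃ 𝒱 ⊆ 𝒰, 𝒱.Countable ∧ closure (⋃₀ 𝒱) = Set.univ

/-- A regularly closed subspace of a weakly Lindelöf space is
weakly Lindelöf. -/
theorem stmt_12 {X : Type*} [TopologicalSpace X] (hX : WeaklyLindelof X)
    (F : Set X) (hF : F = closure (interior F)) :
    WeaklyLindelof F := by
  intro 𝒰 hopen hcov
  have hFclosed : IsClosed F := hF ▸ isClosed_closure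
  have hchoice : ∀ U ∈ 𝒰, ∃ V, IsOpen V ∧ (Subtype.val ⁻¹' V : Set F) = U := by
    intro U hU
    exact isOpen_induced_iff.mp (hopen U hU)
  choose! f hfopen hfpre using hchoice
  set 𝒲 : Set (Set X) := (f '' 𝒰) ∪ {Fᶜ} with h𝒲
  have hWopen : ∀ W ∈ 𝒲, IsOpen W := by
    rintro W (⟨U, hU, rfl⟩ | rfl)
    · exact hfopen U hU
    · exact hFclosed.isOpen_compl
  have hWcov : ⋃₀ 𝒲 = Set.univ := by
    apply Set.eq_univ_of_forall
    intro x
    by_cases hx : x ∈ F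
    · have hmem : (⟨x, hx⟩ : F) ∈ ⋃₀ 𝒰 := hcov ▸ Set.mem_univ _
      obtain ⟨U, hU, hxU⟩ := hmem
      refine ⟨f U, Or.inl ⟨U, hU, rfl⟩, ?_⟩
      rw [← hfpre U hU] at hxU
      exact hxU
    · exact ⟨Fᶜ, Or.inr rfl, hx⟩
  obtain ⟨𝒱', h𝒱'sub, h𝒱'cnt, h𝒱'dense⟩ := hX 𝒲 hWopen hWcov
  have hg : ∀ W ∈ 𝒱' ∩ (f '' 𝒰), ∃ U ∈ 𝒰, f U = W := by
    rintro W ⟨-, U, hU, rfl⟩; exact ⟨U, hU, rfl⟩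
  choose! g hg𝒰 hgf using hg
  refine ⟨g '' (𝒱' ∩ f '' 𝒰), ?_, ?_, ?_⟩
  · rintro U ⟨W, hW, rfl⟩; exact hg𝒰 W hW
  · exact (h𝒱'cnt.mono Set.inter_subset_left).image g
  · apply Set.eq_univ_of_forall
    intro p
    rw [mem_closure_iff]
    intro O' hO' hpO'
    obtain ⟨O, hO, rfl⟩ := isOpen_induced_iff.mp hO'
    have hpF : (p : X) ∈ closure (interior F) := hF ▸ p.2
    obtain ⟨y, hyO, hyI⟩ := mem_closure_iff.mp hpF O hO hpO'
    have hdense : Dense (⋃₀ 𝒱') := by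
      rw [dense_iff_closure_eq]; exact h𝒱'dense
    obtain ⟨z, ⟨hzO, hzI⟩, W, hW𝒱', hzW⟩ :=
      hdense.inter_open_nonempty (O ∩ interior F) (hO.inter isOpen_interior)
        ⟨y, hyO, hyI⟩
    have hzF : z ∈ F := interior_subset hzI
    rcases h𝒱'sub hW𝒱' with ⟨U, hU, rfl⟩ | hWc
    · have hmem : f U ∈ 𝒱' ∩ f '' 𝒰 := ⟨hW𝒱', U, hU, rfl⟩
      refine ⟨⟨z, hzF⟩, hzO, g (f U), ⟨f U, hmem, rfl⟩, ?_⟩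
      have h1 : f (g (f U)) = f U := hgf (f U) hmem
      have h2 := hfpre (g (f U)) (hg𝒰 (f U) hmem)
      rw [← h2]
      show z ∈ f (g (f U))
      rw [h1]; exact hzW
    · have : z ∈ Fᶜ := by rw [← Set.mem_singleton_iff.mp hWc]; exact hzW
      exact absurd hzF this
end

section
/- If X is a weakly Lindelöf topological space and Y is a compact topological space, then the product X × Y is weakly Lindelöf. -/
/-- If X is weakly Lindelöf and Y is compact, then X × Y is weakly Lindelöf. -/
theorem stmt_15 {X Y : Type*} [TopologicalSpace X] [TopologicalSpace Y]
    [CompactSpace Y] (hX : WeaklyLindelof X) : WeaklyLindelof (X × Y) := by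
  intro 𝒰 hopen hcov
  -- Tube lemma: for each x, an open V ∋ x and finite F ⊆ 𝒰 with V × Y ⊆ ⋃₀ F
  have key : ∀ x : X, ∃ (V : Set X) (F : Set (Set (X × Y))),
      IsOpen V ∧ x ∈ V ∧ F ⊆ 𝒰 ∧ F.Countable ∧
      (V ×ˢ (Set.univ : Set Y)) ⊆ ⋃₀ F := by
    intro x
    have h1 : ∀ y : Y, ∃ (A : Set X) (B : Set Y) (U : Set (X × Y)),
        U ∈ 𝒰 ∧ IsOpen A ∧ IsOpen B ∧ x ∈ A ∧ y ∈ B ∧ A ×ˢ B ⊆ U := by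
      intro y
      have hmem : (x, y) ∈ ⋃₀ 𝒰 := by rw [hcov]; exact Set.mem_univ _
      obtain ⟨U, hU, hxy⟩ := hmem
      obtain ⟨A, B, hA, hB, hxA, hyB, hAB⟩ := isOpen_prod_iff.mp (hopen U hU) x y hxy
      exact ⟨A, B, U, hU, hA, hB, hxA, hyB, hAB⟩
    choose A B U hU hA hB hxA hyB hAB using h1
    obtain ⟨t, ht⟩ := IsCompact.elim_finite_subcover isCompact_univ B hB
      (fun y _ => Set.mem_iUnion.mpr ⟨y, hyB y⟩)
    refine ⟨⋂ y ∈ t, A y, U '' t, ?_, ?_, ?_, ?_, ?_⟩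
    · exact isOpen_biInter_finset fun y _ => hA y
    · exact Set.mem_iInter₂.mpr fun y _ => hxA y
    · rintro _ ⟨y, _, rfl⟩; exact hU y
    · exact (t.finite_toSet.image U).countable
    · rintro ⟨a, b⟩ ⟨ha, -⟩
      obtain ⟨_, ⟨y, rfl⟩, _, ⟨hy, rfl⟩, hb⟩ := ht (Set.mem_univ b)
      exact ⟨U y, ⟨y, hy, rfl⟩, hAB y ⟨Set.mem_iInter₂.mp ha y hy, hb⟩⟩
  choose V F hVopen hxV hF𝒰 hFct hVF using key
  obtain ⟨𝒲, h𝒲sub, h𝒲ct, h𝒲dense⟩ := hX (Set.range V)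
    (by rintro _ ⟨x, rfl⟩; exact hVopen x)
    (by ext x; simp only [Set.mem_sUnion, Set.mem_range, Set.mem_univ, iff_true]
        exact ⟨V x, ⟨x, rfl⟩, hxV x⟩)
  -- choose representatives
  have hrep : ∀ W ∈ 𝒲, ∃ x : X, V x = W := fun W hW => h𝒲sub hW
  choose g hg using hrep
  refine ⟨⋃ W ∈ 𝒲, F (g W ‹W ∈ 𝒲›), ?_, ?_, ?_⟩
  · simp only [Set.iUnion_subset_iff]
    intro W hW S hS
    exact hF𝒰 _ hS
  · exact (h𝒲ct.biUnion_iff.mpr fun W hW => hFct _)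
  · rw [Set.eq_univ_iff_forall]
    rintro ⟨a, b⟩
    rw [mem_closure_iff]
    intro S hS habS
    obtain ⟨A, B, hA, hB, haA, hbB, hAB⟩ := isOpen_prod_iff.mp hS a b habS
    have ha' : a ∈ closure (⋃₀ 𝒲) := by rw [h𝒲dense]; exact Set.mem_univ _
    obtain ⟨x', hx'A, W, hW, hx'W⟩ := mem_closure_iff.mp ha' A hA haA
    have hx'V : x' ∈ V (g W hW) := by rw [hg W hW]; exact hx'W
    obtain ⟨T, hT, hmem⟩ := hVF (g W hW) (Set.mk_mem_prod hx'V (Set.mem_univ b))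
    refine ⟨(x', b), hAB ⟨hx'A, hbB⟩, ?_⟩
    exact ⟨T, Set.mem_iUnion.mpr ⟨W, Set.mem_iUnion.mpr ⟨hW, hT⟩⟩, hmem⟩
end

section
/- If X is a normal weakly Lindelöf topological space, then X is quasi-Lindelöf: for every closed set F ⊆ X and every family 𝒰 of open subsets of X covering F, there exists a countable subfamily 𝒱 ⊆ 𝒰 such that F is contained in the closure of the union of the members of 𝒱. -/
/-- If X is a normal weakly Lindelöf topological space, then X is
quasi-Lindelöf: every closed set covered by a family of open sets is contained in
the closure of the union of a countable subfamily. -/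
theorem stmt_16 {X : Type*} [TopologicalSpace X] [NormalSpace X]
    (hwL : ∀ 𝒰 : Set (Set X), (∀ U ∈ 𝒰, IsOpen U) → ⋃₀ 𝒰 = Set.univ →
        ∃ 𝒱 ⊆ 𝒰, 𝒱.Countable ∧ closure (⋃₀ 𝒱) = Set.univ) :
    ∀ (F : Set X), IsClosed F →
      ∀ 𝒰 : Set (Set X), (∀ U ∈ 𝒰, IsOpen U) → F ⊆ ⋃₀ 𝒰 →
        ∃ 𝒱 ⊆ 𝒰, 𝒱.Countable ∧ F ⊆ closure (⋃₀ 𝒱) := by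
  intro F hF 𝒰 hopen hcov
  have hopenU : IsOpen (⋃₀ 𝒰) := isOpen_sUnion hopen
  obtain ⟨V, hVopen, hFV, hVcl⟩ := normal_exists_closure_subset hF hopenU hcov
  set C : Set X := (closure V)ᶜ with hC
  have hcover : ⋃₀ (insert C 𝒰) = Set.univ := by
    apply Set.eq_univ_of_forall
    intro x
    by_cases hx : x ∈ closure V
    · obtain ⟨U, hU, hxU⟩ := hVcl hx
      exact ⟨U, Set.mem_insert_of_mem _ hU, hxU⟩
    · exact ⟨C, Set.mem_insert _ _, hx⟩
  have hopen' : ∀ U ∈ insert C 𝒰, IsOpen U := by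
    intro U hU
    rcases hU with rfl | hU
    · exact isClosed_closure.isOpen_compl
    · exact hopen U hU
  obtain ⟨𝒱', h𝒱'sub, h𝒱'ct, h𝒱'cl⟩ := hwL (insert C 𝒰) hopen' hcover
  refine ⟨𝒱' \ {C}, ?_, h𝒱'ct.mono Set.diff_subset, ?_⟩
  · intro U hU
    rcases h𝒱'sub hU.1 with rfl | h
    · exact absurd rfl hU.2
    · exact h
  · intro x hxF
    rw [mem_closure_iff]
    intro W hWopen hxW
    have hxWV : x ∈ W ∩ V := ⟨hxW, hFV hxF⟩
    have : x ∈ closure (⋃₀ 𝒱') := h𝒱'cl ▸ Set.mem_univ x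
    rw [mem_closure_iff] at this
    obtain ⟨y, hyWV, hyU⟩ := this (W ∩ V) (hWopen.inter hVopen) hxWV
    obtain ⟨U, hU𝒱', hyU⟩ := hyU
    have hUne : U ≠ C := by
      rintro rfl
      exact hyU (subset_closure hyWV.2)
    exact ⟨y, hyWV.1, U, ⟨hU𝒱', hUne⟩, hyU⟩
end

section
/- Every topological space satisfying the countable chain condition is quasi-Lindelöf: for every closed set F ⊆ X and every family 𝒰 of open subsets of X covering F, there exists a countable subfamily 𝒱 ⊆ 𝒰 such that F is contained in the closure of the union of the members of 𝒱. -/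
/-- Every topological space satisfying the countable chain condition is
quasi-Lindelöf: every closed set covered by a family of open sets is contained in the
closure of the union of a countable subfamily. -/
theorem stmt_17 {X : Type*} [TopologicalSpace X]
    (hccc : ∀ 𝒜 : Set (Set X), (∀ U ∈ 𝒜, IsOpen U ∧ U.Nonempty) →
        𝒜.Pairwise Disjoint → 𝒜.Countable) :
    ∀ (F : Set X), IsClosed F →
      ∀ 𝒰 : Set (Set X), (∀ U ∈ 𝒰, IsOpen U) → F ⊆ ⋃₀ 𝒰 →
        ∃ 𝒱 ⊆ 𝒰, 𝒱.Countable ∧ F ⊆ closure (⋃₀ 𝒱) := by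
  classical
  intro F _hF 𝒰 hUopen hcov
  set S : Set (Set (Set X)) :=
    {𝒞 | (∀ C ∈ 𝒞, IsOpen C ∧ C.Nonempty ∧ ∃ U ∈ 𝒰, C ⊆ U) ∧ 𝒞.Pairwise Disjoint} with hSdef
  have hchainS : ∀ c ⊆ S, IsChain (· ⊆ ·) c → ∃ ub ∈ S, ∀ s ∈ c, s ⊆ ub := by
    intro c hcS hchain
    refine ⟨⋃₀ c, ⟨?_, ?_⟩, fun s hs => Set.subset_sUnion_of_mem hs⟩
    · rintro C ⟨𝒟, h𝒟, hC⟩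
      exact (hcS h𝒟).1 C hC
    · rintro A ⟨𝒟₁, h𝒟₁, hA⟩ B ⟨𝒟₂, h𝒟₂, hB⟩ hAB
      rcases hchain.total h𝒟₁ h𝒟₂ with h | h
      · exact (hcS h𝒟₂).2 (h hA) hB hAB
      · exact (hcS h𝒟₁).2 hA (h hB) hAB
  obtain ⟨𝒞, hmax⟩ := zorn_subset S hchainS
  obtain ⟨hprop, hpd⟩ := hmax.prop
  have hcnt : 𝒞.Countable :=
    hccc 𝒞 (fun C hC => ⟨(hprop C hC).1, (hprop C hC).2.1⟩) hpd
  choose! f hfU hfsub using fun C (hC : C ∈ 𝒞) => (hprop C hC).2.2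
  refine ⟨f '' 𝒞, ?_, hcnt.image f, ?_⟩
  · rintro _ ⟨C, hC, rfl⟩; exact hfU C hC
  · intro x hx
    by_contra hxc
    rw [mem_closure_iff] at hxc
    push_neg at hxc
    obtain ⟨W, hWopen, hxW, hWdisj⟩ := hxc
    obtain ⟨U, hU𝒰, hxU⟩ := hcov hx
    have hWsub : ∀ y ∈ W, y ∉ ⋃₀ (f '' 𝒞) := by
      intro y hyW hy
      have hmem : y ∈ W ∩ ⋃₀ (f '' 𝒞) := ⟨hyW, hy⟩
      rw [hWdisj] at hmem
      exact hmem
    have hdisjC : ∀ C ∈ 𝒞, Disjoint (W ∩ U) C := by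
      intro C hC
      refine Set.disjoint_left.mpr ?_
      rintro y ⟨hyW, _⟩ hyC
      exact hWsub y hyW ⟨f C, ⟨C, hC, rfl⟩, hfsub C hC hyC⟩
    have hnew : insert (W ∩ U) 𝒞 ∈ S := by
      constructor
      · rintro C (rfl | hC)
        · exact ⟨hWopen.inter (hUopen U hU𝒰), ⟨x, hxW, hxU⟩, U, hU𝒰, Set.inter_subset_right⟩
        · exact hprop C hC
      · intro A hA B hB hAB
        rcases hA with rfl | hA
        · rcases hB with rfl | hB
          · exact absurd rfl hAB
          · exact hdisjC B hB
        · rcases hB with rfl | hB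
          · exact (hdisjC A hA).symm
          · exact hpd hA hB hAB
    have hmem : (W ∩ U) ∈ 𝒞 := by
      have := hmax.2 hnew (Set.subset_insert _ _)
      exact this (Set.mem_insert _ _)
    exact hWsub x hxW ⟨f (W ∩ U), ⟨_, hmem, rfl⟩, hfsub _ hmem ⟨hxW, hxU⟩⟩
end
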